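/- arXiv:1901.01933 — 3 statements merged into one kernel-verified Lean document; each statement's English description precedes it below -/
import Mathlib

section
/- Suppose Γ computably embeds {A,B} into {C,D}, where C is a linear order with no infinite descending chain and D is a linear order with no infinite ascending chain. Then Γ(α) is finite for every finite linear order α. -/
/-- A finite linear order: a finite piece of an atomic diagram in the language `{<}`,
with domain a finite set of naturals. -/
structure FinLO where
  dom : Finset ℕ
  rel : ℕ → ℕ → Prop
  irrefl : ∀ x ∈ dom, ¬ rel x x
  trans : ∀ x ∈ dom, ∀ y ∈ dom, ∀ z ∈ dom, rel x y → rel y z → rel x z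
  total : ∀ x ∈ dom, ∀ y ∈ dom, x ≠ y → rel x y ∨ rel y x

/-- `β` extends `α` as a finite atomic diagram. -/
def FinLO.Ext (α β : FinLO) : Prop :=
  α.dom ⊆ β.dom ∧ ∀ x ∈ α.dom, ∀ y ∈ α.dom, (α.rel x y ↔ β.rel x y)

/-- An enumeration operator on finite linear orders: it monotonically enumerates
membership facts `x ∈ Γ(α)`, positive atomic facts `x < y` and negative atomic
facts `¬ x < y`. -/
structure EnumOp where
  mem : FinLO → Set ℕ
  pos : FinLO → Set (ℕ × ℕ)
  neg : FinLO → Set (ℕ × ℕ)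
  mono_mem : ∀ {α β : FinLO}, α.Ext β → mem α ⊆ mem β
  mono_pos : ∀ {α β : FinLO}, α.Ext β → pos α ⊆ pos β
  mono_neg : ∀ {α β : FinLO}, α.Ext β → neg α ⊆ neg β

/-- The outputs of `Γ` are consistent with being part of the atomic diagram of
a linear order. -/
def EnumOp.Consistent (Γ : EnumOp) : Prop :=
  ∀ α : FinLO, (∀ x : ℕ, (x, x) ∉ Γ.pos α) ∧
    (∀ x y : ℕ, ¬ ((x, y) ∈ Γ.pos α ∧ (y, x) ∈ Γ.pos α)) ∧
    (∀ x y : ℕ, ¬ ((x, y) ∈ Γ.pos α ∧ (x, y) ∈ Γ.neg α))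

/-- `α ⊩_Γ x < y` : both `x` and `y` occur in `Γ(α)` and no extension `β ⊇ α`
has `Γ(β) ⊨ ¬ (x < y)`. -/
def EnumOp.Forces (Γ : EnumOp) (α : FinLO) (x y : ℕ) : Prop :=
  x ∈ Γ.mem α ∧ y ∈ Γ.mem α ∧ ∀ β : FinLO, α.Ext β → (x, y) ∉ Γ.neg β

/-- Every pair of distinct elements occurring in `Γ(α)` is decided by some
extension of `α`. -/
def EnumOp.Decides (Γ : EnumOp) : Prop :=
  ∀ α : FinLO, ∀ x ∈ Γ.mem α, ∀ y ∈ Γ.mem α, x ≠ y →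
    ∃ β : FinLO, α.Ext β ∧ ((x, y) ∈ Γ.pos β ∨ (x, y) ∈ Γ.neg β)

/-- A (possibly infinite) diagram in the language `{<}` with domain a set of naturals. -/
structure LinDiag where
  dom : Set ℕ
  rel : ℕ → ℕ → Prop

/-- `α` is a finite subdiagram of `L`. -/
def FinLO.SubDiag (α : FinLO) (L : LinDiag) : Prop :=
  ↑α.dom ⊆ L.dom ∧ ∀ x ∈ α.dom, ∀ y ∈ α.dom, (α.rel x y ↔ L.rel x y)

/-- Membership facts enumerated by `Γ` on the infinite diagram `L`. -/
def EnumOp.memD (Γ : EnumOp) (L : LinDiag) : Set ℕ :=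
  {x | ∃ α : FinLO, α.SubDiag L ∧ x ∈ Γ.mem α}

/-- Positive facts `x < y` enumerated by `Γ` on the infinite diagram `L`. -/
def EnumOp.posD (Γ : EnumOp) (L : LinDiag) : Set (ℕ × ℕ) :=
  {p | ∃ α : FinLO, α.SubDiag L ∧ p ∈ Γ.pos α}

/-- Negative facts `¬ x < y` enumerated by `Γ` on the infinite diagram `L`. -/
def EnumOp.negD (Γ : EnumOp) (L : LinDiag) : Set (ℕ × ℕ) :=
  {p | ∃ α : FinLO, α.SubDiag L ∧ p ∈ Γ.neg α}

/-- `L` is (the atomic diagram of) a copy of the linear order `τ`. -/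
def IsCopy (τ : Type) [LinearOrder τ] (L : LinDiag) : Prop :=
  ∃ f : τ → ℕ, Function.Injective f ∧ Set.range f = L.dom ∧
    ∀ i j : τ, (L.rel (f i) (f j) ↔ i < j)

/-- The output of `Γ` on `L` is (the atomic diagram of) a copy of the linear
order `σ`. -/
def EnumOp.OutCopy (Γ : EnumOp) (σ : Type) [LinearOrder σ] (L : LinDiag) : Prop :=
  ∃ g : σ → ℕ, Function.Injective g ∧ Γ.memD L = Set.range g ∧
    (∀ a b : σ, ((g a, g b) ∈ Γ.posD L ↔ a < b)) ∧
    (∀ a b : σ, ((g a, g b) ∈ Γ.negD L ↔ ¬ a < b))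

/-- `Γ` is a computable embedding of the pair `{A, B}` into the pair `{C, D}`:
it maps every copy of `A` to a copy of `C` and every copy of `B` to a copy of `D`. -/
def EnumOp.Embeds (Γ : EnumOp) (A B C D : Type) [LinearOrder A] [LinearOrder B]
    [LinearOrder C] [LinearOrder D] : Prop :=
  (∀ L : LinDiag, IsCopy A L → Γ.OutCopy C L) ∧
  (∀ L : LinDiag, IsCopy B L → Γ.OutCopy D L)

/-
Suppose `Γ(α)` is infinite. Extend `α` to a copy of `B` and, on fresh elements disjoint from
those, to a copy of `A`. In the copy of `D` produced from the first, the infinite set `Γ(α)`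
contains a strictly decreasing sequence `y₀ > y₁ > ⋯`, since `D` has no ascending chain. In the
copy of `C` produced from the second, the `yₙ` cannot all be decreasing, so `yᵢ < yⱼ` there for
some `i < j`. Both facts are enumerated from finite extensions of `α` that overlap only in `α`;
amalgamating them gives one finite linear order from which `Γ` enumerates both `yᵢ < yⱼ` and
`yⱼ < yᵢ`, and extending it to a copy of `A` contradicts that `Γ` outputs a copy of `C`.
-/

open Function Finset

namespace FinLO

variable {X : Type*} [LinearOrder X] {α β β₁ β₂ γ : FinLO} {e : ℕ → X}

def IsRealizedBy (β : FinLO) (e : ℕ → X) : Prop :=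
  ∀ ⦃x⦄, x ∈ β.dom → ∀ ⦃y⦄, y ∈ β.dom → β.rel x y → e x < e y

theorem IsRealizedBy.rel_iff (he : β.IsRealizedBy e) {x y : ℕ} (hx : x ∈ β.dom)
    (hy : y ∈ β.dom) : β.rel x y ↔ e x < e y := by
  refine ⟨(he hx hy ·), fun hlt => ?_⟩
  rcases eq_or_ne x y with rfl | hne
  · exact absurd hlt (lt_irrefl _)
  · exact (β.total x hx y hy hne).resolve_right fun hyx => lt_asymm hlt (he hy hx hyx)

theorem IsRealizedBy.injOn (he : β.IsRealizedBy e) : Set.InjOn e β.dom := by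
  intro x hx y hy hxy
  by_contra hne
  rcases β.total x hx y hy hne with h | h
  · exact (he hx hy h).ne hxy
  · exact (he hy hx h).ne hxy.symm

open Classical in
noncomputable def rk (β : FinLO) (x : ℕ) : ℕ :=
  #{w ∈ β.dom | β.rel w x}

theorem rk_lt_card {x : ℕ} (hx : x ∈ β.dom) : β.rk x < #β.dom := by
  classical
  exact card_lt_card (filter_ssubset.2 ⟨x, hx, β.irrefl x hx⟩)

theorem isRealizedBy_rk (β : FinLO) : β.IsRealizedBy β.rk := by
  intro x hx y hy hxy
  classical
  refine card_lt_card ((ssubset_iff_of_subset fun w hw => ?_).2 ⟨x, ?_, fun hx' => ?_⟩)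
  · rw [mem_filter] at hw ⊢
    exact ⟨hw.1, β.trans w hw.1 x hx y hy hw.2 hxy⟩
  · exact mem_filter.2 ⟨hx, hxy⟩
  · exact β.irrefl x hx (mem_filter.1 hx').2

def ofInjOn (s : Finset ℕ) (e : ℕ → X) (he : Set.InjOn e s) : FinLO where
  dom := s
  rel x y := e x < e y
  irrefl x _ := lt_irrefl (e x)
  trans _ _ _ _ _ _ := lt_trans
  total _ hx _ hy hne := lt_or_gt_of_ne fun h => hne (he hx hy h)

theorem ext_ofInjOn {s : Finset ℕ} (he : Set.InjOn e s) (hβ : β.dom ⊆ s)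
    (hβe : β.IsRealizedBy e) : β.Ext (ofInjOn s e he) :=
  ⟨hβ, fun _ hx _ hy => hβe.rel_iff hx hy⟩

theorem Ext.trans (h₁ : α.Ext β) (h₂ : β.Ext γ) : α.Ext γ :=
  ⟨h₁.1.trans h₂.1, fun x hx y hy => (h₁.2 x hx y hy).trans (h₂.2 x (h₁.1 hx) y (h₁.1 hy))⟩

def Compatible (β₁ β₂ : FinLO) : Prop :=
  ∀ x ∈ β₁.dom ∩ β₂.dom, ∀ y ∈ β₁.dom ∩ β₂.dom, (β₁.rel x y ↔ β₂.rel x y)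

theorem SubDiag.compatible {L : LinDiag} (h₁ : β₁.SubDiag L) (h₂ : β₂.SubDiag L) :
    β₁.Compatible β₂ := fun x hx y hy =>
  (h₁.2 x (mem_inter.1 hx).1 y (mem_inter.1 hy).1).trans
    (h₂.2 x (mem_inter.1 hx).2 y (mem_inter.1 hy).2).symm

theorem Ext.compatible (h₁ : α.Ext β₁) (h₂ : α.Ext β₂) (h : β₁.dom ∩ β₂.dom ⊆ α.dom) :
    β₁.Compatible β₂ := fun x hx y hy =>
  (h₁.2 x (h hx) y (h hy)).symm.trans (h₂.2 x (h hx) y (h hy))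

section Amalgamation

variable (β₁ β₂)

open Classical in
noncomputable def amalgFloor (z : ℕ) : ℕ :=
  {k ∈ β₁.dom ∩ β₂.dom | β₂.rel k z}.sup (β₁.rk · + 1)

/- Elements of `β₁` sit at the positions given by their `β₁`-rank; an element of `β₂` outside
`β₁` sits just above the largest common element below it, and such elements are ordered among
themselves by their `β₂`-rank. -/
noncomputable def amalgKey (z : ℕ) : ℕ ×ₗ ℕ :=
  open Classical in
  if z ∈ β₁.dom then toLex (β₁.rk z + 1, 0) else toLex (amalgFloor β₁ β₂ z, β₂.rk z + 1)

variable {β₁ β₂}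

theorem le_amalgFloor {k z : ℕ} (hk : k ∈ β₁.dom ∩ β₂.dom) (hkz : β₂.rel k z) :
    β₁.rk k + 1 ≤ amalgFloor β₁ β₂ z := by
  classical
  exact le_sup (f := (β₁.rk · + 1)) (mem_filter.2 ⟨hk, hkz⟩)

theorem amalgFloor_le (h : β₁.Compatible β₂) {k z : ℕ} (hz : z ∈ β₂.dom)
    (hk : k ∈ β₁.dom ∩ β₂.dom) (hzk : β₂.rel z k) : amalgFloor β₁ β₂ z ≤ β₁.rk k := by
  classical
  refine Finset.sup_le fun k' hk' => ?_
  obtain ⟨hk'₁₂, hk'z⟩ := mem_filter.1 hk'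
  have hk'k : β₂.rel k' k := β₂.trans k' (mem_inter.1 hk'₁₂).2 z hz k (mem_inter.1 hk).2 hk'z hzk
  exact β₁.isRealizedBy_rk (mem_inter.1 hk'₁₂).1 (mem_inter.1 hk).1 ((h k' hk'₁₂ k hk).2 hk'k)

theorem amalgFloor_mono {x y : ℕ} (hx : x ∈ β₂.dom) (hy : y ∈ β₂.dom) (hxy : β₂.rel x y) :
    amalgFloor β₁ β₂ x ≤ amalgFloor β₁ β₂ y := by
  classical
  refine sup_mono fun k hk => ?_
  obtain ⟨hk₁₂, hkx⟩ := mem_filter.1 hk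
  exact mem_filter.2 ⟨hk₁₂, β₂.trans k (mem_inter.1 hk₁₂).2 x hx y hy hkx hxy⟩

theorem isRealizedBy_amalgKey_left : β₁.IsRealizedBy (amalgKey β₁ β₂) := by
  intro x hx y hy hxy
  simp only [amalgKey, if_pos hx, if_pos hy]
  exact Prod.Lex.toLex_lt_toLex.2 (.inl (Nat.succ_lt_succ (β₁.isRealizedBy_rk hx hy hxy)))

theorem isRealizedBy_amalgKey_right (h : β₁.Compatible β₂) :
    β₂.IsRealizedBy (amalgKey β₁ β₂) := by
  intro x hx y hy hxy
  by_cases hx₁ : x ∈ β₁.dom <;> by_cases hy₁ : y ∈ β₁.dom <;>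
    simp only [amalgKey, hx₁, hy₁, if_true, if_false]
  · have hxy₁ := (h x (mem_inter.2 ⟨hx₁, hx⟩) y (mem_inter.2 ⟨hy₁, hy⟩)).2 hxy
    exact Prod.Lex.toLex_lt_toLex.2 (.inl (Nat.succ_lt_succ (β₁.isRealizedBy_rk hx₁ hy₁ hxy₁)))
  · exact Prod.Lex.toLex_strictMono <| Prod.mk_lt_mk_of_le_of_lt
      (le_amalgFloor (mem_inter.2 ⟨hx₁, hx⟩) hxy) (Nat.succ_pos _)
  · exact Prod.Lex.toLex_lt_toLex.2
      (.inl (Nat.lt_succ_of_le (amalgFloor_le h hx (mem_inter.2 ⟨hy₁, hy⟩) hxy)))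
  · exact Prod.Lex.toLex_strictMono <| Prod.mk_lt_mk_of_le_of_lt (amalgFloor_mono hx hy hxy)
      (Nat.succ_lt_succ (β₂.isRealizedBy_rk hx hy hxy))

theorem injOn_amalgKey (h : β₁.Compatible β₂) :
    Set.InjOn (amalgKey β₁ β₂) ↑(β₁.dom ∪ β₂.dom) := by
  intro x hx y hy hxy
  have hx₂ : x ∉ β₁.dom → x ∈ β₂.dom := (mem_union.1 hx).resolve_left
  have hy₂ : y ∉ β₁.dom → y ∈ β₂.dom := (mem_union.1 hy).resolve_left
  by_cases hx₁ : x ∈ β₁.dom <;> by_cases hy₁ : y ∈ β₁.dom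
  · exact isRealizedBy_amalgKey_left.injOn hx₁ hy₁ hxy
  · -- a key with second coordinate `0` belongs to `β₁`
    simp [amalgKey, hx₁, hy₁] at hxy
  · simp [amalgKey, hx₁, hy₁] at hxy
  · exact (isRealizedBy_amalgKey_right h).injOn (hx₂ hx₁) (hy₂ hy₁) hxy

theorem Compatible.exists_ext (h : β₁.Compatible β₂) :
    ∃ γ : FinLO, β₁.Ext γ ∧ β₂.Ext γ ∧ γ.dom = β₁.dom ∪ β₂.dom :=
  ⟨ofInjOn _ _ (injOn_amalgKey h),
    ext_ofInjOn _ subset_union_left isRealizedBy_amalgKey_left,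
    ext_ofInjOn _ subset_union_right (isRealizedBy_amalgKey_right h), rfl⟩

end Amalgamation

end FinLO

def LinDiag.image {τ : Type*} [LT τ] (f : τ → ℕ) : LinDiag where
  dom := Set.range f
  rel x y := ∃ i j, f i = x ∧ f j = y ∧ i < j

theorem LinDiag.image_rel_apply {τ : Type*} [LT τ] {f : τ → ℕ} (hf : Injective f) {i j : τ} :
    (LinDiag.image f).rel (f i) (f j) ↔ i < j :=
  ⟨fun ⟨_, _, hi, hj, h⟩ => hf hi ▸ hf hj ▸ h, fun h => ⟨i, j, rfl, rfl, h⟩⟩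

namespace FinLO

theorem exists_isCopy_subDiag (τ : Type) [LinearOrder τ] [Countable τ] [Infinite τ]
    (β : FinLO) (u : ℕ → ℕ) (hu : Injective u) (hβu : ∀ k, u k ∉ β.dom) :
    ∃ L : LinDiag, IsCopy τ L ∧ β.SubDiag L ∧ L.dom ⊆ ↑β.dom ∪ Set.range u := by
  obtain ⟨enc, henc⟩ := exists_injective_nat τ
  obtain ⟨s, hs⟩ := Infinite.exists_subset_card_eq τ #β.dom
  let h : β.dom → τ := fun x => s.orderEmbOfFin hs ⟨β.rk x, rk_lt_card x.2⟩
  have hrel : ∀ x y : β.dom, β.rel x y ↔ h x < h y := fun x y => by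
    simp only [h, OrderEmbedding.lt_iff_lt, Fin.mk_lt_mk]
    exact β.isRealizedBy_rk.rel_iff x.2 y.2
  have hh : Injective h := fun x y hxy => Subtype.ext <|
    β.isRealizedBy_rk.injOn x.2 y.2 (Fin.mk.inj_iff.1 ((s.orderEmbOfFin hs).injective hxy))
  let f : τ → ℕ := extend h Subtype.val (u ∘ enc)
  have hf_h : ∀ x, f (h x) = x := hh.extend_apply _ _
  have hf_u : ∀ a ∉ Set.range h, f a = u (enc a) := fun a ha => extend_apply' _ _ a ha
  have hf : Injective f := by
    intro a b hab
    by_cases ha : a ∈ Set.range h <;> by_cases hb : b ∈ Set.range h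
    · obtain ⟨x, rfl⟩ := ha
      obtain ⟨y, rfl⟩ := hb
      rw [hh.eq_iff, ← Subtype.val_inj, ← hf_h, ← hf_h y, hab]
    · obtain ⟨x, rfl⟩ := ha
      rw [hf_h, hf_u b hb] at hab
      exact absurd (hab ▸ x.2) (hβu _)
    · obtain ⟨y, rfl⟩ := hb
      rw [hf_h, hf_u a ha] at hab
      exact absurd (hab ▸ y.2) (hβu _)
    · exact henc (hu (hf_u a ha ▸ hf_u b hb ▸ hab))
  refine ⟨LinDiag.image f, ⟨f, hf, rfl, fun _ _ => LinDiag.image_rel_apply hf⟩, ⟨?_, ?_⟩, ?_⟩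
  · exact fun x hx => ⟨h ⟨x, hx⟩, hf_h _⟩
  · intro x hx y hy
    rw [hrel ⟨x, hx⟩ ⟨y, hy⟩, ← LinDiag.image_rel_apply hf, hf_h, hf_h]
  · rintro _ ⟨a, rfl⟩
    by_cases ha : a ∈ Set.range h
    · obtain ⟨x, rfl⟩ := ha
      exact .inl (by rw [hf_h]; exact x.2)
    · exact .inr ⟨enc a, (hf_u a ha).symm⟩

theorem exists_isCopy_isCopy (τ₁ τ₂ : Type) [LinearOrder τ₁] [Countable τ₁] [Infinite τ₁]
    [LinearOrder τ₂] [Countable τ₂] [Infinite τ₂] (β : FinLO) :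
    ∃ L₁ L₂ : LinDiag, IsCopy τ₁ L₁ ∧ IsCopy τ₂ L₂ ∧ β.SubDiag L₁ ∧ β.SubDiag L₂ ∧
      L₁.dom ∩ L₂.dom ⊆ β.dom := by
  obtain ⟨M, hM⟩ := β.dom.exists_nat_subset_range
  have hfresh : ∀ n, M ≤ n → n ∉ β.dom := fun n hn hβ => (mem_range.1 (hM hβ)).not_ge hn
  obtain ⟨L₁, h₁, hβ₁, hdom₁⟩ := β.exists_isCopy_subDiag τ₁ (fun k => M + 2 * k)
    (fun a b hab => by simp only at hab; omega) (fun k => hfresh _ (by omega))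
  obtain ⟨L₂, h₂, hβ₂, hdom₂⟩ := β.exists_isCopy_subDiag τ₂ (fun k => M + 2 * k + 1)
    (fun a b hab => by simp only at hab; omega) (fun k => hfresh _ (by omega))
  refine ⟨L₁, L₂, h₁, h₂, hβ₁, hβ₂, fun x ⟨hx₁, hx₂⟩ => ?_⟩
  obtain hx | ⟨k, rfl⟩ := hdom₁ hx₁
  · exact hx
  obtain hx | ⟨k', hk'⟩ := hdom₂ hx₂
  · exact hx
  · simp only at hk'
    omega

end FinLO

namespace EnumOp

variable {Γ : EnumOp} {σ : Type} [LinearOrder σ] {L : LinDiag}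

theorem OutCopy.posD_asymm (hL : Γ.OutCopy σ L) {x y : ℕ} (hx : x ∈ Γ.memD L)
    (hy : y ∈ Γ.memD L) (hxy : (x, y) ∈ Γ.posD L) : (y, x) ∉ Γ.posD L := by
  obtain ⟨g, -, hmem, hpos, -⟩ := hL
  rw [hmem] at hx hy
  obtain ⟨a, rfl⟩ := hx
  obtain ⟨b, rfl⟩ := hy
  exact fun hyx => lt_asymm ((hpos a b).1 hxy) ((hpos b a).1 hyx)

theorem OutCopy.exists_posD_of_not_strictAnti (hL : Γ.OutCopy σ L)
    (hσ : ¬∃ f : ℕ → σ, StrictAnti f) {y : ℕ → ℕ} (hy : Injective y)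
    (hyL : ∀ n, y n ∈ Γ.memD L) : ∃ i j, i < j ∧ (y i, y j) ∈ Γ.posD L := by
  obtain ⟨g, -, hmem, hpos, -⟩ := hL
  choose c hc using fun n => hmem ▸ hyL n
  obtain ⟨i, j, hij, hji⟩ : ∃ i j, i < j ∧ ¬c j < c i := by
    by_contra! h
    exact hσ ⟨c, fun i j hij => h i j hij⟩
  have hne : c i ≠ c j := fun h => hij.ne (hy (by rw [← hc i, ← hc j, h]))
  refine ⟨i, j, hij, ?_⟩
  rw [← hc i, ← hc j]
  exact (hpos _ _).2 ((not_lt.1 hji).lt_of_ne hne)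

theorem OutCopy.exists_posD_of_not_strictMono (hL : Γ.OutCopy σ L)
    (hσ : ¬∃ f : ℕ → σ, StrictMono f) {T : Set ℕ} (hT : T.Infinite) (hTL : T ⊆ Γ.memD L) :
    ∃ y : ℕ → ℕ, Injective y ∧ (∀ n, y n ∈ T) ∧ ∀ i j, i < j → (y j, y i) ∈ Γ.posD L := by
  obtain ⟨g, hg, hmem, hpos, -⟩ := hL
  have : Infinite (g ⁻¹' T) := (hT.preimage (hmem ▸ hTL)).to_subtype
  obtain ⟨d, hd | hd⟩ := Infinite.exists_strictMono_or_strictAnti (g ⁻¹' T)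
  · exact absurd ⟨_, (Subtype.strictMono_coe _).comp hd⟩ hσ
  · exact ⟨fun n => g (d n), hg.comp (Subtype.val_injective.comp hd.injective),
      fun n => (d n).2, fun i j hij => (hpos _ _).2 (hd hij)⟩

theorem exists_ext_pos_of_posD {α : FinLO} (hα : α.SubDiag L) {p : ℕ × ℕ}
    (hp : p ∈ Γ.posD L) : ∃ β : FinLO, α.Ext β ∧ ↑β.dom ⊆ L.dom ∧ p ∈ Γ.pos β := by
  obtain ⟨β', hβ'L, hp⟩ := hp
  obtain ⟨β, hβ'β, hαβ, hdom⟩ := (hβ'L.compatible hα).exists_ext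
  refine ⟨β, hαβ, ?_, Γ.mono_pos hβ'β hp⟩
  rw [hdom, coe_union]
  exact Set.union_subset hβ'L.1 hα.1

theorem pos_asymm_of_outCopy (τ : Type) [LinearOrder τ] [Countable τ] [Infinite τ]
    (hΓ : ∀ L, IsCopy τ L → Γ.OutCopy σ L) (γ : FinLO) {x y : ℕ} (hx : x ∈ Γ.mem γ)
    (hy : y ∈ Γ.mem γ) (hxy : (x, y) ∈ Γ.pos γ) : (y, x) ∉ Γ.pos γ := by
  obtain ⟨M, hM⟩ := γ.dom.exists_nat_subset_range
  obtain ⟨L, hL, hγL, -⟩ := γ.exists_isCopy_subDiag τ (M + ·) (add_right_injective M)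
    fun k hk => (mem_range.1 (hM hk)).not_ge (Nat.le_add_right M k)
  exact fun hyx => (hΓ L hL).posD_asymm ⟨γ, hγL, hx⟩ ⟨γ, hγL, hy⟩ ⟨γ, hγL, hxy⟩ ⟨γ, hγL, hyx⟩

end EnumOp

/-- if `Γ` computably embeds `{A, B}` into `{C, D}`, where `C` has
no infinite descending chain and `D` has no infinite ascending chain, then
`Γ(α)` is finite for every finite linear order `α`. -/
theorem gamma_finite_on_conditions (A B C D : Type) [LinearOrder A] [LinearOrder B]
    [LinearOrder C] [LinearOrder D] [Countable A] [Countable B] [Infinite A] [Infinite B]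
    (Γ : EnumOp) (hΓ : Γ.Embeds A B C D)
    (hC : ¬ ∃ f : ℕ → C, StrictAnti f) (hD : ¬ ∃ f : ℕ → D, StrictMono f) :
    ∀ α : FinLO, (Γ.mem α).Finite := by
  intro α
  by_contra hinf
  obtain ⟨LA, LB, hA, hB, hαA, hαB, hAB⟩ := α.exists_isCopy_isCopy A B
  obtain ⟨y, hy, hyα, hyB⟩ :=
    (hΓ.2 LB hB).exists_posD_of_not_strictMono hD hinf fun x hx => ⟨α, hαB, hx⟩
  obtain ⟨i, j, hij, hyA⟩ :=
    (hΓ.1 LA hA).exists_posD_of_not_strictAnti hC hy fun n => ⟨α, hαA, hyα n⟩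
  obtain ⟨β₁, hαβ₁, hβ₁A, hβ₁⟩ := Γ.exists_ext_pos_of_posD hαA hyA
  obtain ⟨β₂, hαβ₂, hβ₂B, hβ₂⟩ := Γ.exists_ext_pos_of_posD hαB (hyB i j hij)
  have hβ₁₂ : β₁.dom ∩ β₂.dom ⊆ α.dom := fun x hx =>
    hAB ⟨hβ₁A (mem_inter.1 hx).1, hβ₂B (mem_inter.1 hx).2⟩
  obtain ⟨γ, hβ₁γ, hβ₂γ, -⟩ := (hαβ₁.compatible hαβ₂ hβ₁₂).exists_ext
  have hαγ := hαβ₁.trans hβ₁γ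
  exact Γ.pos_asymm_of_outCopy A hΓ.1 γ (Γ.mono_mem hαγ (hyα i)) (Γ.mono_mem hαγ (hyα j))
    (Γ.mono_pos hβ₁γ hβ₁) (Γ.mono_pos hβ₂γ hβ₂)
end

section
/- Let L₁ be a linear order with a least element and no greatest element, and L₂ a linear order with a greatest element and no least element. Then {L₁, L₂} ≤_c {E₁, E₂}, where E_k is the equivalence structure with infinitely many infinite classes and exactly one class of size k. -/
/-- A finite piece of an atomic diagram of a structure in a language with one
binary relation, with domain a finite set of naturals. -/
structure FinD where
  dom : Finset ℕ
  rel : ℕ → ℕ → Prop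

/-- `β` extends `α` as a finite atomic diagram. -/
def FinD.Ext (α β : FinD) : Prop :=
  α.dom ⊆ β.dom ∧ ∀ x ∈ α.dom, ∀ y ∈ α.dom, (α.rel x y ↔ β.rel x y)

/-- An enumeration operator: it monotonically enumerates membership facts,
positive atomic facts `R(x, y)` and negative atomic facts `¬ R(x, y)`. -/
structure EOp where
  mem : FinD → Set ℕ
  pos : FinD → Set (ℕ × ℕ)
  neg : FinD → Set (ℕ × ℕ)
  mono_mem : ∀ {α β : FinD}, α.Ext β → mem α ⊆ mem β
  mono_pos : ∀ {α β : FinD}, α.Ext β → pos α ⊆ pos β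
  mono_neg : ∀ {α β : FinD}, α.Ext β → neg α ⊆ neg β

/-- A (possibly infinite) diagram with domain a set of naturals. -/
structure Diag where
  dom : Set ℕ
  rel : ℕ → ℕ → Prop

/-- `α` is a finite subdiagram of `L`. -/
def FinD.SubDiag (α : FinD) (L : Diag) : Prop :=
  ↑α.dom ⊆ L.dom ∧ ∀ x ∈ α.dom, ∀ y ∈ α.dom, (α.rel x y ↔ L.rel x y)

/-- Membership facts enumerated by `Γ` on the diagram `L`. -/
def EOp.memD (Γ : EOp) (L : Diag) : Set ℕ :=
  {x | ∃ α : FinD, α.SubDiag L ∧ x ∈ Γ.mem α}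

/-- Positive facts enumerated by `Γ` on the diagram `L`. -/
def EOp.posD (Γ : EOp) (L : Diag) : Set (ℕ × ℕ) :=
  {p | ∃ α : FinD, α.SubDiag L ∧ p ∈ Γ.pos α}

/-- Negative facts enumerated by `Γ` on the diagram `L`. -/
def EOp.negD (Γ : EOp) (L : Diag) : Set (ℕ × ℕ) :=
  {p | ∃ α : FinD, α.SubDiag L ∧ p ∈ Γ.neg α}

/-- `L` is (the atomic diagram of) a copy of the structure `(τ, r)`. -/
def IsCopyR {τ : Type} (r : τ → τ → Prop) (L : Diag) : Prop :=
  ∃ f : τ → ℕ, Function.Injective f ∧ Set.range f = L.dom ∧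
    ∀ i j : τ, (L.rel (f i) (f j) ↔ r i j)

/-- The output of `Γ` on `L` is (the atomic diagram of) a copy of `(σ, s)`. -/
def EOp.OutCopyR {σ : Type} (Γ : EOp) (s : σ → σ → Prop) (L : Diag) : Prop :=
  ∃ g : σ → ℕ, Function.Injective g ∧ Γ.memD L = Set.range g ∧
    (∀ a b : σ, ((g a, g b) ∈ Γ.posD L ↔ s a b)) ∧
    (∀ a b : σ, ((g a, g b) ∈ Γ.negD L ↔ ¬ s a b))

/-- `{A₁, A₂} ≤_c {B₁, B₂}` : there is an enumeration operator mapping every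
copy of `A₁` to a copy of `B₁` and every copy of `A₂` to a copy of `B₂`. -/
def PairLE {τ₁ τ₂ σ₁ σ₂ : Type} (r₁ : τ₁ → τ₁ → Prop) (r₂ : τ₂ → τ₂ → Prop)
    (s₁ : σ₁ → σ₁ → Prop) (s₂ : σ₂ → σ₂ → Prop) : Prop :=
  ∃ Γ : EOp, (∀ L : Diag, IsCopyR r₁ L → Γ.OutCopyR s₁ L) ∧
    (∀ L : Diag, IsCopyR r₂ L → Γ.OutCopyR s₂ L)

/-- The equivalence structure `E` with infinitely many infinite classes and no
finite classes: classes are the columns of `ℕ × ℕ`. -/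
def relE : ℕ × ℕ → ℕ × ℕ → Prop := fun p q => p.1 = q.1

/-- The equivalence structure `E_k` with infinitely many infinite classes and
exactly one class of size `k`. -/
def relEk (k : ℕ) : (ℕ × ℕ) ⊕ Fin k → (ℕ × ℕ) ⊕ Fin k → Prop := fun x y =>
  match x, y with
  | Sum.inl p, Sum.inl q => p.1 = q.1
  | Sum.inr _, Sum.inr _ => True
  | _, _ => False

/-- The equivalence structure `Ê_k` with infinitely many infinite classes and
infinitely many classes of size exactly `k`. -/
def relEhat (k : ℕ) : (ℕ × ℕ) ⊕ (ℕ × Fin k) → (ℕ × ℕ) ⊕ (ℕ × Fin k) → Prop := fun x y =>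
  match x, y with
  | Sum.inl p, Sum.inl q => p.1 = q.1
  | Sum.inr p, Sum.inr q => p.1 = q.1
  | _, _ => False

/-!
The operator `Γ` turns every element `x` of the input order into an equivalence class of points
labelled `x`: the point `ptA x`, the point `ptC x` as soon as something lies below `x`, and a point
`ptB x y z` for every `y < x < z`. All of these are witnessed by finitely many order facts, so `Γ`
is an enumeration operator. In `L₁` the least element gets a class of size one and every other
element infinitely many points `ptB x m z` (there is no greatest element); in `L₂` the greatest
element `m` gets a class of size two and every other element infinitely many points `ptB x y m`
(there is no least element).
-/

open Set Function

def Diag.Sub (L M : Diag) : Prop :=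
  L.dom ⊆ M.dom ∧ ∀ x ∈ L.dom, ∀ y ∈ L.dom, (L.rel x y ↔ M.rel x y)

def FinD.toDiag (α : FinD) : Diag := ⟨α.dom, α.rel⟩

def Diag.restrict (L : Diag) (s : Finset ℕ) : FinD := ⟨s, L.rel⟩

theorem FinD.Ext.toDiag_sub {α β : FinD} (h : α.Ext β) : α.toDiag.Sub β.toDiag := h

theorem FinD.SubDiag.toDiag_sub {α : FinD} {L : Diag} (h : α.SubDiag L) : α.toDiag.Sub L := h

@[simp] theorem Diag.restrict_toDiag_dom (L : Diag) (s : Finset ℕ) :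
    (L.restrict s).toDiag.dom = ↑s :=
  rfl

theorem Diag.restrict_subDiag {L : Diag} {s : Finset ℕ} (hs : ↑s ⊆ L.dom) :
    (L.restrict s).SubDiag L :=
  ⟨hs, fun _ _ _ _ => Iff.rfl⟩

theorem Diag.restrict_ext {L : Diag} {s t : Finset ℕ} (hst : s ⊆ t) :
    (L.restrict s).Ext (L.restrict t) :=
  ⟨hst, fun _ _ _ _ => Iff.rfl⟩

def EOp.ofLabel (c : ℕ → ℕ) (P : Diag → Set ℕ) (hP : ∀ {L M : Diag}, L.Sub M → P L ⊆ P M) :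
    EOp where
  mem α := P α.toDiag
  pos α := {p | p.1 ∈ P α.toDiag ∧ p.2 ∈ P α.toDiag ∧ c p.1 = c p.2}
  neg α := {p | p.1 ∈ P α.toDiag ∧ p.2 ∈ P α.toDiag ∧ c p.1 ≠ c p.2}
  mono_mem h := hP h.toDiag_sub
  mono_pos h _ hp := ⟨hP h.toDiag_sub hp.1, hP h.toDiag_sub hp.2.1, hp.2.2⟩
  mono_neg h _ hp := ⟨hP h.toDiag_sub hp.1, hP h.toDiag_sub hp.2.1, hp.2.2⟩

section ofLabel

variable {c : ℕ → ℕ} {P : Diag → Set ℕ} {hP : ∀ {L M : Diag}, L.Sub M → P L ⊆ P M} {L : Diag}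
  (hfin : ∀ n ∈ P L, ∃ s : Finset ℕ, ↑s ⊆ L.dom ∧ n ∈ P (L.restrict s).toDiag)
include hP hfin

theorem exists_restrict_mem_mem {a b : ℕ} (ha : a ∈ P L) (hb : b ∈ P L) :
    ∃ s : Finset ℕ, ↑s ⊆ L.dom ∧ a ∈ P (L.restrict s).toDiag ∧ b ∈ P (L.restrict s).toDiag := by
  obtain ⟨s, hs, has⟩ := hfin a ha
  obtain ⟨t, ht, hbt⟩ := hfin b hb
  refine ⟨s ∪ t, by simpa using union_subset hs ht, ?_, ?_⟩
  · exact hP (Diag.restrict_ext Finset.subset_union_left).toDiag_sub has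
  · exact hP (Diag.restrict_ext Finset.subset_union_right).toDiag_sub hbt

theorem EOp.memD_ofLabel : (EOp.ofLabel c P hP).memD L = P L := by
  ext n
  constructor
  · rintro ⟨α, hα, hn⟩
    exact hP hα.toDiag_sub hn
  · intro hn
    obtain ⟨s, hs, hns⟩ := hfin n hn
    exact ⟨_, Diag.restrict_subDiag hs, hns⟩

theorem EOp.mem_posD_ofLabel {a b : ℕ} :
    (a, b) ∈ (EOp.ofLabel c P hP).posD L ↔ a ∈ P L ∧ b ∈ P L ∧ c a = c b := by
  constructor
  · rintro ⟨α, hα, ha, hb, hab⟩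
    exact ⟨hP hα.toDiag_sub ha, hP hα.toDiag_sub hb, hab⟩
  · rintro ⟨ha, hb, hab⟩
    obtain ⟨s, hs, has, hbs⟩ := exists_restrict_mem_mem (hP := hP) hfin ha hb
    exact ⟨_, Diag.restrict_subDiag hs, has, hbs, hab⟩

theorem EOp.mem_negD_ofLabel {a b : ℕ} :
    (a, b) ∈ (EOp.ofLabel c P hP).negD L ↔ a ∈ P L ∧ b ∈ P L ∧ c a ≠ c b := by
  constructor
  · rintro ⟨α, hα, ha, hb, hab⟩
    exact ⟨hP hα.toDiag_sub ha, hP hα.toDiag_sub hb, hab⟩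
  · rintro ⟨ha, hb, hab⟩
    obtain ⟨s, hs, has, hbs⟩ := exists_restrict_mem_mem (hP := hP) hfin ha hb
    exact ⟨_, Diag.restrict_subDiag hs, has, hbs, hab⟩

theorem EOp.outCopyR_ofLabel {σ : Type} {s : σ → σ → Prop} {g : σ → ℕ} (hg : Injective g)
    (hrange : range g = P L) (hs : ∀ a b, c (g a) = c (g b) ↔ s a b) :
    (EOp.ofLabel c P hP).OutCopyR s L := by
  have hgP : ∀ a, g a ∈ P L := fun a => hrange ▸ mem_range_self a
  refine ⟨g, hg, (EOp.memD_ofLabel hfin).trans hrange.symm, fun a b => ?_, fun a b => ?_⟩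
  · rw [EOp.mem_posD_ofLabel hfin, ← hs]
    simp only [hgP, true_and]
  · rw [EOp.mem_negD_ofLabel hfin, ← hs]
    simp only [hgP, true_and, ne_eq]

end ofLabel

theorem Set.nonempty_equiv_fin_of_encard_eq {α : Type*} {s : Set α} {k : ℕ} (h : s.encard = k) :
    Nonempty (Fin k ≃ s) := by
  have := (Set.finite_of_encard_eq_coe h).to_subtype
  rw [← Finite.card_eq, Nat.card_coe_set_eq, Set.ncard_def, h, Nat.card_eq_fintype_card,
    Fintype.card_fin, ENat.toNat_natCast]

def relEkClass {k : ℕ} : (ℕ × ℕ) ⊕ Fin k → Option ℕ := Sum.elim (fun p => some p.1) fun _ => none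

theorem relEk_iff_relEkClass_eq {k : ℕ} (a b : (ℕ × ℕ) ⊕ Fin k) :
    relEk k a b ↔ relEkClass a = relEkClass b := by
  rcases a with a | a <;> rcases b with b | b <;> simp [relEk, relEkClass]

theorem exists_relEk_enum {α β : Type*} [Countable α] {S : Set α} {c : α → β} {x₀ : β} {k : ℕ}
    (hk : (S ∩ c ⁻¹' {x₀}).encard = k) (hinf : (c '' S \ {x₀}).Infinite)
    (hcls : ∀ x ∈ c '' S \ {x₀}, (S ∩ c ⁻¹' {x}).Infinite) :
    ∃ g : (ℕ × ℕ) ⊕ Fin k → α, Injective g ∧ range g = S ∧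
      ∀ a b, c (g a) = c (g b) ↔ relEk k a b := by
  have : Countable (c '' S \ {x₀} :) := ((S.to_countable.image c).mono sdiff_subset).to_subtype
  have := hinf.to_subtype
  obtain ⟨e⟩ : Nonempty (ℕ ≃ (c '' S \ {x₀} :)) := nonempty_equiv_of_countable
  have hcol : ∀ i, Nonempty (ℕ ≃ (S ∩ c ⁻¹' {(e i).1} :)) := fun i =>
    have := (hcls _ (e i).2).to_subtype
    nonempty_equiv_of_countable
  obtain ⟨T⟩ := Set.nonempty_equiv_fin_of_encard_eq hk
  let col i := (hcol i).some
  let g : (ℕ × ℕ) ⊕ Fin k → α := Sum.elim (fun p => (col p.1 p.2).1) fun t => (T t).1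
  let classLabel : Option ℕ → β := fun o => o.elim x₀ fun i => (e i).1
  have hlabel : Injective classLabel := by
    rintro (_ | i) (_ | j) h
    · rfl
    · exact absurd h.symm (e j).2.2
    · exact absurd h (e i).2.2
    · exact congrArg some (e.injective (Subtype.ext h))
  have hcg : ∀ a, c (g a) = classLabel (relEkClass a) := by
    rintro (p | t)
    · exact (col p.1 p.2).2.2
    · exact (T t).2.2
  have hrel : ∀ a b, c (g a) = c (g b) ↔ relEk k a b := fun a b => by
    rw [hcg, hcg, hlabel.eq_iff, relEk_iff_relEkClass_eq]
  refine ⟨g, ?_, ?_, hrel⟩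
  · intro a b hab
    have hcl := (hrel a b).1 (congrArg c hab)
    rcases a with ⟨i, j⟩ | t <;> rcases b with ⟨i', j'⟩ | t' <;>
      simp only [relEk, Sum.elim_inl, Sum.elim_inr, g] at hcl hab ⊢
    · subst hcl
      rw [(col i).injective (Subtype.ext hab)]
    · rw [T.injective (Subtype.ext hab)]
  · refine subset_antisymm ?_ fun n hn => ?_
    · rintro _ ⟨p | t, rfl⟩
      exacts [(col p.1 p.2).2.1, (T t).2.1]
    by_cases hx : c n = x₀
    · exact ⟨Sum.inr (T.symm ⟨n, hn, hx⟩), by simp [g]⟩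
    · set i := e.symm ⟨c n, mem_image_of_mem c hn, hx⟩
      have hni : n ∈ S ∩ c ⁻¹' {(e i).1} := ⟨hn, by simp [i]⟩
      exact ⟨Sum.inl (i, (col i).symm ⟨n, hni⟩), by simp [g]⟩

namespace OrdersToEquivalence

def lab (n : ℕ) : ℕ := n.unpair.1

def ptA (x : ℕ) : ℕ := Nat.pair x 0

def ptC (x : ℕ) : ℕ := Nat.pair x 1

def ptB (x y z : ℕ) : ℕ := Nat.pair x (Nat.pair y z + 2)

@[simp] theorem lab_ptA (x : ℕ) : lab (ptA x) = x := by simp [lab, ptA]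

@[simp] theorem lab_ptC (x : ℕ) : lab (ptC x) = x := by simp [lab, ptC]

@[simp] theorem lab_ptB (x y z : ℕ) : lab (ptB x y z) = x := by simp [lab, ptB]

theorem ptA_ne_ptC (x : ℕ) : ptA x ≠ ptC x := by simp [ptA, ptC]

theorem ptB_inj {x y z y' z' : ℕ} : ptB x y z = ptB x y' z' ↔ y = y' ∧ z = z' := by
  simp [ptB]

def points (L : Diag) : Set ℕ :=
  {n | ∃ x ∈ L.dom, n = ptA x ∨ (∃ y ∈ L.dom, L.rel y x ∧ n = ptC x) ∨
    ∃ y ∈ L.dom, ∃ z ∈ L.dom, L.rel y x ∧ L.rel x z ∧ n = ptB x y z}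

theorem points_mono {L M : Diag} (h : L.Sub M) : points L ⊆ points M := by
  rintro n ⟨x, hx, rfl | ⟨y, hy, hyx, rfl⟩ | ⟨y, hy, z, hz, hyx, hxz, rfl⟩⟩
  · exact ⟨x, h.1 hx, .inl rfl⟩
  · exact ⟨x, h.1 hx, .inr <| .inl ⟨y, h.1 hy, (h.2 y hy x hx).1 hyx, rfl⟩⟩
  · exact ⟨x, h.1 hx, .inr <| .inr
      ⟨y, h.1 hy, z, h.1 hz, (h.2 y hy x hx).1 hyx, (h.2 x hx z hz).1 hxz, rfl⟩⟩

theorem exists_finset_mem_points {L : Diag} {n : ℕ} (hn : n ∈ points L) :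
    ∃ s : Finset ℕ, ↑s ⊆ L.dom ∧ n ∈ points (L.restrict s).toDiag := by
  rcases hn with ⟨x, hx, rfl | ⟨y, hy, hyx, rfl⟩ | ⟨y, hy, z, hz, hyx, hxz, rfl⟩⟩
  · exact ⟨{x}, by simpa using hx, x, by simp, .inl rfl⟩
  · refine ⟨{x, y}, ?_, x, by simp, .inr <| .inl ⟨y, by simp, hyx, rfl⟩⟩
    simp [Set.insert_subset_iff, hx, hy]
  · refine ⟨{x, y, z}, ?_, x, by simp, .inr <| .inr ⟨y, by simp, z, by simp, hyx, hxz, rfl⟩⟩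
    simp [Set.insert_subset_iff, hx, hy, hz]

theorem mem_points_inter_lab {L : Diag} {x n : ℕ} :
    n ∈ points L ∩ lab ⁻¹' {x} ↔ x ∈ L.dom ∧ (n = ptA x ∨ (∃ y ∈ L.dom, L.rel y x ∧ n = ptC x) ∨
      ∃ y ∈ L.dom, ∃ z ∈ L.dom, L.rel y x ∧ L.rel x z ∧ n = ptB x y z) := by
  constructor
  · rintro ⟨⟨x', hx', hn⟩, hlab⟩
    obtain rfl : x' = x := by
      rcases hn with rfl | ⟨_, _, _, rfl⟩ | ⟨_, _, _, _, _, _, rfl⟩ <;> simpa using hlab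
    exact ⟨hx', hn⟩
  · rintro ⟨hx, hn⟩
    refine ⟨⟨x, hx, hn⟩, ?_⟩
    rcases hn with rfl | ⟨_, _, _, rfl⟩ | ⟨_, _, _, _, _, _, rfl⟩ <;> simp

theorem image_lab_points (L : Diag) : lab '' points L = L.dom := by
  refine subset_antisymm ?_ fun x hx => ⟨ptA x, ⟨x, hx, .inl rfl⟩, lab_ptA x⟩
  rintro _ ⟨n, hn, rfl⟩
  exact (mem_points_inter_lab.1 ⟨hn, rfl⟩).1

theorem points_inter_lab_of_isMin {L : Diag} {x : ℕ} (hx : x ∈ L.dom)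
    (hmin : ∀ y ∈ L.dom, ¬ L.rel y x) : points L ∩ lab ⁻¹' {x} = {ptA x} := by
  ext n
  rw [mem_points_inter_lab, mem_singleton_iff]
  constructor
  · rintro ⟨-, hn | ⟨y, hy, hyx, -⟩ | ⟨y, hy, -, -, hyx, -⟩⟩
    exacts [hn, absurd hyx (hmin y hy), absurd hyx (hmin y hy)]
  · rintro rfl
    exact ⟨hx, .inl rfl⟩

theorem points_inter_lab_of_isMax {L : Diag} {x y : ℕ} (hx : x ∈ L.dom) (hy : y ∈ L.dom)
    (hyx : L.rel y x) (hmax : ∀ z ∈ L.dom, ¬ L.rel x z) :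
    points L ∩ lab ⁻¹' {x} = {ptA x, ptC x} := by
  ext n
  rw [mem_points_inter_lab, mem_insert_iff, mem_singleton_iff]
  constructor
  · rintro ⟨-, hn | ⟨-, -, -, hn⟩ | ⟨-, -, z, hz, -, hxz, -⟩⟩
    exacts [.inl hn, .inr hn, absurd hxz (hmax z hz)]
  · rintro (rfl | rfl)
    exacts [⟨hx, .inl rfl⟩, ⟨hx, .inr <| .inl ⟨y, hy, hyx, rfl⟩⟩]

theorem points_inter_lab_infinite_of_above {L : Diag} {x y : ℕ} (hx : x ∈ L.dom)
    (hy : y ∈ L.dom) (hyx : L.rel y x) (hinf : {z ∈ L.dom | L.rel x z}.Infinite) :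
    (points L ∩ lab ⁻¹' {x}).Infinite := by
  refine (hinf.image (f := ptB x y) fun z _ z' _ h => (ptB_inj.1 h).2).mono ?_
  rintro _ ⟨z, ⟨hz, hxz⟩, rfl⟩
  exact mem_points_inter_lab.2 ⟨hx, .inr <| .inr ⟨y, hy, z, hz, hyx, hxz, rfl⟩⟩

theorem points_inter_lab_infinite_of_below {L : Diag} {x z : ℕ} (hx : x ∈ L.dom)
    (hz : z ∈ L.dom) (hxz : L.rel x z) (hinf : {y ∈ L.dom | L.rel y x}.Infinite) :
    (points L ∩ lab ⁻¹' {x}).Infinite := by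
  refine (hinf.image (f := (ptB x · z)) fun y _ y' _ h => (ptB_inj.1 h).1).mono ?_
  rintro _ ⟨y, ⟨hy, hyx⟩, rfl⟩
  exact mem_points_inter_lab.2 ⟨hx, .inr <| .inr ⟨y, hy, z, hz, hyx, hxz, rfl⟩⟩

def Γ : EOp := EOp.ofLabel lab points points_mono

section Copy

variable {Lo : Type} {L : Diag} {f : Lo → ℕ} (hf : Injective f) (hdom : range f = L.dom)
include hf hdom

theorem Γ_outCopyR_relEk [Infinite Lo] {k : ℕ} (m : Lo)
    (hk : (points L ∩ lab ⁻¹' {f m}).encard = k)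
    (hcls : ∀ i ≠ m, (points L ∩ lab ⁻¹' {f i}).Infinite) : Γ.OutCopyR (relEk k) L := by
  have hlab : lab '' points L = range f := (image_lab_points L).trans hdom.symm
  obtain ⟨g, hg, hrange, hgk⟩ := exists_relEk_enum hk
    (hlab ▸ (infinite_range_of_injective hf).sdiff (finite_singleton _))
    (by rw [hlab]; rintro _ ⟨⟨i, rfl⟩, hi⟩; exact hcls i (ne_of_apply_ne f hi))
  exact EOp.outCopyR_ofLabel (fun _ => exists_finset_mem_points) hg hrange hgk

variable [LinearOrder Lo] (hrel : ∀ i j, L.rel (f i) (f j) ↔ i < j)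
include hrel

theorem setOf_rel_right_infinite [NoMaxOrder Lo] (i : Lo) :
    {z ∈ L.dom | L.rel (f i) z}.Infinite :=
  ((Ioi_infinite i).image hf.injOn).mono <| by
    rintro _ ⟨j, hij, rfl⟩
    exact ⟨hdom ▸ mem_range_self j, (hrel i j).2 hij⟩

theorem setOf_rel_left_infinite [NoMinOrder Lo] (i : Lo) :
    {y ∈ L.dom | L.rel y (f i)}.Infinite :=
  ((Iio_infinite i).image hf.injOn).mono <| by
    rintro _ ⟨j, hji, rfl⟩
    exact ⟨hdom ▸ mem_range_self j, (hrel j i).2 hji⟩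

theorem Γ_outCopyR_relEk_one [NoMaxOrder Lo] {m : Lo} (hm : IsBot m) :
    Γ.OutCopyR (relEk 1) L := by
  have hfL : ∀ i, f i ∈ L.dom := fun i => hdom ▸ mem_range_self i
  have : Nonempty Lo := ⟨m⟩
  refine Γ_outCopyR_relEk hf hdom m ?_ fun i hi => ?_
  · rw [points_inter_lab_of_isMin (hfL m), encard_singleton, Nat.cast_one]
    rintro _ hy
    obtain ⟨j, rfl⟩ := hdom ▸ hy
    exact (hrel j m).not.2 (hm j).not_gt
  · exact points_inter_lab_infinite_of_above (hfL i) (hfL m) ((hrel m i).2 ((hm i).lt_of_ne' hi))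
      (setOf_rel_right_infinite hf hdom hrel i)

theorem Γ_outCopyR_relEk_two [NoMinOrder Lo] {m : Lo} (hm : IsTop m) :
    Γ.OutCopyR (relEk 2) L := by
  have hfL : ∀ i, f i ∈ L.dom := fun i => hdom ▸ mem_range_self i
  have : Nonempty Lo := ⟨m⟩
  obtain ⟨y, hym⟩ := exists_lt m
  refine Γ_outCopyR_relEk hf hdom m ?_ fun i hi => ?_
  · rw [points_inter_lab_of_isMax (hfL m) (hfL y) ((hrel y m).2 hym), encard_pair (ptA_ne_ptC _),
      Nat.cast_ofNat]
    rintro _ hz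
    obtain ⟨j, rfl⟩ := hdom ▸ hz
    exact (hrel m j).not.2 (hm j).not_gt
  · exact points_inter_lab_infinite_of_below (hfL i) (hfL m) ((hrel i m).2 ((hm i).lt_of_ne hi))
      (setOf_rel_left_infinite hf hdom hrel i)

end Copy

end OrdersToEquivalence

theorem orders_to_equivalence_general (L₁ L₂ : Type) [LinearOrder L₁] [LinearOrder L₂]
    (h1least : ∃ a : L₁, ∀ b : L₁, a ≤ b) (h1nogreat : ¬ ∃ a : L₁, ∀ b : L₁, b ≤ a)
    (h2great : ∃ a : L₂, ∀ b : L₂, b ≤ a) (h2noleast : ¬ ∃ a : L₂, ∀ b : L₂, a ≤ b) :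
    PairLE ((· < ·) : L₁ → L₁ → Prop) ((· < ·) : L₂ → L₂ → Prop)
      (relEk 1) (relEk 2) := by
  obtain ⟨m₁, hm₁⟩ := h1least
  obtain ⟨m₂, hm₂⟩ := h2great
  have : NoTopOrder L₁ := ⟨by simpa using h1nogreat⟩
  have : NoBotOrder L₂ := ⟨by simpa using h2noleast⟩
  have := NoTopOrder.to_noMaxOrder L₁
  have := NoBotOrder.to_noMinOrder L₂
  refine ⟨OrdersToEquivalence.Γ, ?_, ?_⟩
  · rintro L ⟨f, hf, hdom, hrel⟩
    exact OrdersToEquivalence.Γ_outCopyR_relEk_one hf hdom hrel hm₁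
  · rintro L ⟨f, hf, hdom, hrel⟩
    exact OrdersToEquivalence.Γ_outCopyR_relEk_two hf hdom hrel hm₂

/-- if `L₁` is a linear order with a least element and no greatest
element, and `L₂` a linear order with a greatest element and no least element,
then `{L₁, L₂} ≤_c {E₁, E₂}`. -/
theorem orders_to_equivalence (L₁ L₂ : Type) [LinearOrder L₁] [LinearOrder L₂]
    [Countable L₁] [Countable L₂]
    (h1least : ∃ a : L₁, ∀ b : L₁, a ≤ b) (h1nogreat : ¬ ∃ a : L₁, ∀ b : L₁, b ≤ a)
    (h2great : ∃ a : L₂, ∀ b : L₂, b ≤ a) (h2noleast : ¬ ∃ a : L₂, ∀ b : L₂, a ≤ b) :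
    PairLE ((· < ·) : L₁ → L₁ → Prop) ((· < ·) : L₂ → L₂ → Prop)
      (relEk 1) (relEk 2) :=
  orders_to_equivalence_general L₁ L₂ h1least h1nogreat h2great h2noleast
end

section
/- Suppose A and B are structures in the same language and φ is a computable Σ₂ sentence with A ⊨ φ and B ⊨ ¬φ. Then {A,B} ≤_c {Ê₁, E}, where Ê₁ is the equivalence structure with infinitely many infinite classes and infinitely many singleton classes, and E has infinitely many infinite classes and no finite classes. -/
/-- Atomic formulas in two variables `x, y` over a language with one binary
relation symbol. -/
inductive Atom2 : Type
  | rxy | ryx | rxx | ryy | eqxy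

/-- Evaluation of an atomic formula at elements `x, y` of the structure `(τ, r)`. -/
def Atom2.eval {τ : Type} (r : τ → τ → Prop) (x y : τ) : Atom2 → Prop
  | .rxy => r x y
  | .ryx => r y x
  | .rxx => r x x
  | .ryy => r y y
  | .eqxy => x = y

namespace Sigma2Aux

open Function Set

/-- key of an always-infinite class -/
def Kal (n : ℕ) : ℕ := Nat.pair 0 n

/-- key of a tested class -/
def Kt (c i n : ℕ) : ℕ := Nat.pair 1 (Nat.pair (Nat.pair c i) n)

lemma Kal_inj : Function.Injective Kal := fun a b h => by
  simpa [Kal, Nat.pair_eq_pair] using h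

lemma Kt_ne_Kal {c i n n' : ℕ} : Kt c i n ≠ Kal n' := by
  simp [Kt, Kal, Nat.pair_eq_pair]

lemma Kt_eq_kt {c i n c' i' n' : ℕ} :
    Kt c i n = Kt c' i' n' ↔ c = c' ∧ i = i' ∧ n = n' := by
  simp [Kt, Nat.pair_eq_pair, and_assoc]

lemma eval_iff_of_agree {r r' : ℕ → ℕ → Prop} {c d : ℕ}
    (h : ∀ x y, (x = c ∨ x = d) → (y = c ∨ y = d) → (r x y ↔ r' x y)) :
    ∀ t : Atom2, (t.eval r c d ↔ t.eval r' c d) := by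
  intro t
  cases t <;>
    simp [Atom2.eval, h c c (Or.inl rfl) (Or.inl rfl), h c d (Or.inl rfl) (Or.inr rfl),
      h d c (Or.inr rfl) (Or.inl rfl), h d d (Or.inr rfl) (Or.inr rfl)]

lemma eval_sub {α : FinD} {L : Diag} (h : α.SubDiag L) {c d : ℕ}
    (hc : c ∈ α.dom) (hd : d ∈ α.dom) (t : Atom2) :
    t.eval α.rel c d ↔ t.eval L.rel c d := by
  refine eval_iff_of_agree ?_ t
  rintro x y (rfl | rfl) (rfl | rfl)
  exacts [h.2 _ hc _ hc, h.2 _ hc _ hd, h.2 _ hd _ hc, h.2 _ hd _ hd]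

lemma eval_ext {α β : FinD} (h : α.Ext β) {c d : ℕ}
    (hc : c ∈ α.dom) (hd : d ∈ α.dom) (t : Atom2) :
    t.eval α.rel c d ↔ t.eval β.rel c d := by
  refine eval_iff_of_agree ?_ t
  rintro x y (rfl | rfl) (rfl | rfl)
  exacts [h.2 _ hc _ hc, h.2 _ hc _ hd, h.2 _ hd _ hc, h.2 _ hd _ hd]

lemma eval_copy {τ : Type} {r : τ → τ → Prop} {L : Diag} {f : τ → ℕ}
    (finj : Function.Injective f)
    (hf : ∀ i j, L.rel (f i) (f j) ↔ r i j) (x y : τ) (t : Atom2) :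
    t.eval L.rel (f x) (f y) ↔ t.eval r x y := by
  cases t <;> simp [Atom2.eval, hf, finj.eq_iff]

variable (a : ℕ → ℕ → Atom2)

/-- `c` has a counterexample witnessed inside `α` for disjunct `i`. -/
def Pc (i c : ℕ) (α : FinD) : Prop :=
  c ∈ α.dom ∧ ∃ j, ∃ d ∈ α.dom, ¬ (a i j).eval α.rel c d

def memF (α : FinD) : Set ℕ :=
  {x | (∃ n m, x = Nat.pair (Kal n) m) ∨
       (∃ c ∈ α.dom, ∃ i n, x = Nat.pair (Kt c i n) 0) ∨
       (∃ c i, Pc a i c α ∧ ∃ n m, x = Nat.pair (Kt c i n) m)}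

lemma Pc_mono {α β : FinD} (h : α.Ext β) {i c : ℕ} (hp : Pc a i c α) :
    Pc a i c β := by
  obtain ⟨hc, j, d, hd, hnot⟩ := hp
  refine ⟨h.1 hc, j, d, h.1 hd, fun he => hnot ?_⟩
  rw [eval_ext h hc hd]
  exact he

lemma memF_mono {α β : FinD} (h : α.Ext β) : memF a α ⊆ memF a β := by
  rintro x (h1 | ⟨c, hc, i, n, rfl⟩ | ⟨c, i, hp, n, m, rfl⟩)
  · exact Or.inl h1
  · exact Or.inr (Or.inl ⟨c, h.1 hc, i, n, rfl⟩)
  · exact Or.inr (Or.inr ⟨c, i, Pc_mono a h hp, n, m, rfl⟩)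

def SameK (p : ℕ × ℕ) : Prop := (Nat.unpair p.1).1 = (Nat.unpair p.2).1

def Γop : EOp where
  mem := memF a
  pos := fun α => {p | p.1 ∈ memF a α ∧ p.2 ∈ memF a α ∧ SameK p}
  neg := fun α => {p | p.1 ∈ memF a α ∧ p.2 ∈ memF a α ∧ ¬ SameK p}
  mono_mem h := memF_mono a h
  mono_pos h := fun p hp => ⟨memF_mono a h hp.1, memF_mono a h hp.2.1, hp.2.2⟩
  mono_neg h := fun p hp => ⟨memF_mono a h hp.1, memF_mono a h hp.2.1, hp.2.2⟩

lemma subdiag_mk (L : Diag) (s : Finset ℕ) (hs : ↑s ⊆ L.dom) :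
    FinD.SubDiag ⟨s, L.rel⟩ L :=
  ⟨hs, fun _ _ _ _ => Iff.rfl⟩

/-- `c` is eventually put in an infinite class (disjunct `i`). -/
def QL (L : Diag) (i c : ℕ) : Prop :=
  ∃ j, ∃ d ∈ L.dom, ¬ (a i j).eval L.rel c d

lemma memD_eq (L : Diag) :
    (Γop a).memD L = {x | (∃ n m, x = Nat.pair (Kal n) m) ∨
       (∃ c ∈ L.dom, ∃ i n, x = Nat.pair (Kt c i n) 0) ∨
       (∃ c i, (c ∈ L.dom ∧ QL a L i c) ∧ ∃ n m, x = Nat.pair (Kt c i n) m)} := by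
  ext x
  constructor
  · rintro ⟨α, hsub, hx⟩
    rcases hx with h1 | ⟨c, hc, i, n, rfl⟩ | ⟨c, i, ⟨hc, j, d, hd, hnot⟩, n, m, rfl⟩
    · exact Or.inl h1
    · exact Or.inr (Or.inl ⟨c, hsub.1 hc, i, n, rfl⟩)
    · refine Or.inr (Or.inr ⟨c, i, ⟨hsub.1 hc, j, d, hsub.1 hd, fun he => hnot ?_⟩, n, m, rfl⟩)
      rw [eval_sub hsub hc hd]
      exact he
  · rintro (⟨n, m, rfl⟩ | ⟨c, hc, i, n, rfl⟩ | ⟨c, i, ⟨hc, j, d, hd, hnot⟩, n, m, rfl⟩)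
    · exact ⟨⟨∅, L.rel⟩, subdiag_mk L ∅ (by simp), Or.inl ⟨n, m, rfl⟩⟩
    · exact ⟨⟨{c}, L.rel⟩, subdiag_mk L {c} (by simpa using hc),
        Or.inr (Or.inl ⟨c, by simp, i, n, rfl⟩)⟩
    · refine ⟨⟨{c, d}, L.rel⟩, subdiag_mk L {c, d} ?_,
        Or.inr (Or.inr ⟨c, i, ⟨by simp, j, d, by simp, hnot⟩, n, m, rfl⟩)⟩
      intro z hz
      simp only [Finset.coe_insert, Finset.coe_singleton, Set.mem_insert_iff,
        Set.mem_singleton_iff] at hz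
      rcases hz with rfl | rfl <;> assumption

lemma ext_union_left (α₁ α₂ : FinD) (L : Diag) (h1 : α₁.SubDiag L) :
    α₁.Ext ⟨α₁.dom ∪ α₂.dom, L.rel⟩ :=
  ⟨Finset.subset_union_left, fun x hx y hy => h1.2 x hx y hy⟩

lemma ext_union_right (α₁ α₂ : FinD) (L : Diag) (h2 : α₂.SubDiag L) :
    α₂.Ext ⟨α₁.dom ∪ α₂.dom, L.rel⟩ :=
  ⟨Finset.subset_union_right, fun x hx y hy => h2.2 x hx y hy⟩

lemma posD_eq (L : Diag) :
    (Γop a).posD L =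
      {p | p.1 ∈ (Γop a).memD L ∧ p.2 ∈ (Γop a).memD L ∧ SameK p} := by
  ext p
  constructor
  · rintro ⟨α, hs, h1, h2, h3⟩
    exact ⟨⟨α, hs, h1⟩, ⟨α, hs, h2⟩, h3⟩
  · rintro ⟨⟨α₁, h1, m1⟩, ⟨α₂, h2, m2⟩, h3⟩
    refine ⟨⟨α₁.dom ∪ α₂.dom, L.rel⟩, ?_, ?_, ?_, h3⟩
    · refine ⟨?_, fun _ _ _ _ => Iff.rfl⟩
      intro z hz
      simp only [Finset.coe_union, Set.mem_union] at hz
      rcases hz with hz | hz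
      exacts [h1.1 hz, h2.1 hz]
    · exact memF_mono a (ext_union_left α₁ α₂ L h1) m1
    · exact memF_mono a (ext_union_right α₁ α₂ L h2) m2

lemma negD_eq (L : Diag) :
    (Γop a).negD L =
      {p | p.1 ∈ (Γop a).memD L ∧ p.2 ∈ (Γop a).memD L ∧ ¬ SameK p} := by
  ext p
  constructor
  · rintro ⟨α, hs, h1, h2, h3⟩
    exact ⟨⟨α, hs, h1⟩, ⟨α, hs, h2⟩, h3⟩
  · rintro ⟨⟨α₁, h1, m1⟩, ⟨α₂, h2, m2⟩, h3⟩
    refine ⟨⟨α₁.dom ∪ α₂.dom, L.rel⟩, ?_, ?_, ?_, h3⟩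
    · refine ⟨?_, fun _ _ _ _ => Iff.rfl⟩
      intro z hz
      simp only [Finset.coe_union, Set.mem_union] at hz
      rcases hz with hz | hz
      exacts [h1.1 hz, h2.1 hz]
    · exact memF_mono a (ext_union_left α₁ α₂ L h1) m1
    · exact memF_mono a (ext_union_right α₁ α₂ L h2) m2

def KeyInf (D : Set ℕ) (Q : ℕ → ℕ → Prop) : Set ℕ :=
  {K | (∃ n, K = Kal n) ∨ ∃ c i, c ∈ D ∧ Q i c ∧ ∃ n, K = Kt c i n}

def KeySing (D : Set ℕ) (Q : ℕ → ℕ → Prop) : Set ℕ :=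
  {K | ∃ c i, c ∈ D ∧ ¬ Q i c ∧ ∃ n, K = Kt c i n}

lemma keys_disjoint {D : Set ℕ} {Q : ℕ → ℕ → Prop} :
    ∀ K, K ∈ KeyInf D Q → K ∈ KeySing D Q → False := by
  rintro K (⟨n, rfl⟩ | ⟨c, i, hc, hq, n, rfl⟩) ⟨c', i', hc', hq', n', hK⟩
  · exact Kt_ne_Kal hK.symm
  · rw [Kt_eq_kt] at hK
    obtain ⟨rfl, rfl, rfl⟩ := hK
    exact hq' hq

lemma memD_keys (L : Diag) :
    (Γop a).memD L =
      {x | (∃ K ∈ KeyInf L.dom (QL a L), ∃ m, x = Nat.pair K m) ∨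
           (∃ K ∈ KeySing L.dom (QL a L), x = Nat.pair K 0)} := by
  classical
  rw [memD_eq]
  ext x
  simp only [Set.mem_setOf_eq]
  constructor
  · rintro (⟨n, m, rfl⟩ | ⟨c, hc, i, n, rfl⟩ | ⟨c, i, ⟨hc, hq⟩, n, m, rfl⟩)
    · exact Or.inl ⟨Kal n, Or.inl ⟨n, rfl⟩, m, rfl⟩
    · by_cases hq : QL a L i c
      · exact Or.inl ⟨Kt c i n, Or.inr ⟨c, i, hc, hq, n, rfl⟩, 0, rfl⟩
      · exact Or.inr ⟨Kt c i n, ⟨c, i, hc, hq, n, rfl⟩, rfl⟩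
    · exact Or.inl ⟨Kt c i n, Or.inr ⟨c, i, hc, hq, n, rfl⟩, m, rfl⟩
  · rintro (⟨K, (⟨n, rfl⟩ | ⟨c, i, hc, hq, n, rfl⟩), m, rfl⟩ | ⟨K, ⟨c, i, hc, hq, n, rfl⟩, rfl⟩)
    · exact Or.inl ⟨n, m, rfl⟩
    · exact Or.inr (Or.inr ⟨c, i, ⟨hc, hq⟩, n, m, rfl⟩)
    · exact Or.inr (Or.inl ⟨c, hc, i, n, rfl⟩)

lemma exists_enum {s : Set ℕ} (hs : s.Infinite) :
    ∃ e : ℕ → ℕ, Function.Injective e ∧ Set.range e = s := by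
  haveI : Infinite s := hs.to_subtype
  obtain ⟨d⟩ := nonempty_denumerable s
  refine ⟨fun n => ((Denumerable.eqv s).symm n : ℕ), ?_, ?_⟩
  · intro x y h
    exact (Denumerable.eqv s).symm.injective (Subtype.coe_injective h)
  · ext x
    constructor
    · rintro ⟨n, rfl⟩
      exact ((Denumerable.eqv s).symm n).2
    · intro hx
      exact ⟨(Denumerable.eqv s) ⟨x, hx⟩, by simp⟩

lemma outcopy_E {Γ : EOp} {L : Diag} {KI : Set ℕ}
    (hmem : Γ.memD L = {x | ∃ K ∈ KI, ∃ m, x = Nat.pair K m})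
    (hpos : Γ.posD L = {p | p.1 ∈ Γ.memD L ∧ p.2 ∈ Γ.memD L ∧ SameK p})
    (hneg : Γ.negD L = {p | p.1 ∈ Γ.memD L ∧ p.2 ∈ Γ.memD L ∧ ¬ SameK p})
    (hKI : KI.Infinite) : Γ.OutCopyR relE L := by
  obtain ⟨e, einj, erng⟩ := exists_enum hKI
  have hg : ∀ p : ℕ × ℕ, Nat.pair (e p.1) p.2 ∈ Γ.memD L := by
    intro p
    rw [hmem]
    exact ⟨e p.1, erng ▸ Set.mem_range_self p.1, p.2, rfl⟩
  refine ⟨fun p => Nat.pair (e p.1) p.2, ?_, ?_, ?_, ?_⟩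
  · intro p q h
    rw [Nat.pair_eq_pair] at h
    exact Prod.ext (einj h.1) h.2
  · rw [hmem]
    ext x
    constructor
    · rintro ⟨K, hK, m, rfl⟩
      rw [← erng] at hK
      obtain ⟨n, rfl⟩ := hK
      exact ⟨(n, m), rfl⟩
    · rintro ⟨⟨n, m⟩, rfl⟩
      exact ⟨e n, erng ▸ Set.mem_range_self n, m, rfl⟩
  · intro p q
    rw [hpos]
    simp only [Set.mem_setOf_eq, hg p, hg q, true_and]
    simp [SameK, Nat.unpair_pair, relE, einj.eq_iff]
  · intro p q
    rw [hneg]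
    simp only [Set.mem_setOf_eq, hg p, hg q, true_and]
    simp [SameK, Nat.unpair_pair, relE, einj.eq_iff]

lemma outcopy_Ehat {Γ : EOp} {L : Diag} {KI KS : Set ℕ}
    (hmem : Γ.memD L = {x | (∃ K ∈ KI, ∃ m, x = Nat.pair K m) ∨
        (∃ K ∈ KS, x = Nat.pair K 0)})
    (hpos : Γ.posD L = {p | p.1 ∈ Γ.memD L ∧ p.2 ∈ Γ.memD L ∧ SameK p})
    (hneg : Γ.negD L = {p | p.1 ∈ Γ.memD L ∧ p.2 ∈ Γ.memD L ∧ ¬ SameK p})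
    (hKI : KI.Infinite) (hKS : KS.Infinite)
    (hdisj : ∀ K, K ∈ KI → K ∈ KS → False) :
    Γ.OutCopyR (relEhat 1) L := by
  obtain ⟨eI, eIinj, eIrng⟩ := exists_enum hKI
  obtain ⟨eS, eSinj, eSrng⟩ := exists_enum hKS
  set g : (ℕ × ℕ) ⊕ (ℕ × Fin 1) → ℕ := fun z =>
    match z with
    | Sum.inl p => Nat.pair (eI p.1) p.2
    | Sum.inr p => Nat.pair (eS p.1) 0 with hgdef
  have hgI : ∀ n, eI n ∈ KI := fun n => eIrng ▸ Set.mem_range_self n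
  have hgS : ∀ n, eS n ∈ KS := fun n => eSrng ▸ Set.mem_range_self n
  have hgmem : ∀ z, g z ∈ Γ.memD L := by
    rintro (⟨n, m⟩ | ⟨n, v⟩) <;> rw [hmem]
    · exact Or.inl ⟨eI n, hgI n, m, rfl⟩
    · exact Or.inr ⟨eS n, hgS n, rfl⟩
  have hne : ∀ n n', eI n ≠ eS n' := fun n n' h => hdisj _ (hgI n) (h ▸ hgS n')
  have hsame : ∀ z w, SameK (g z, g w) ↔ relEhat 1 z w := by
    rintro (⟨n, m⟩ | ⟨n, v⟩) (⟨n', m'⟩ | ⟨n', v'⟩)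
    · simp [hgdef, SameK, Nat.unpair_pair, relEhat, eIinj.eq_iff]
    · simp [hgdef, SameK, Nat.unpair_pair, relEhat, hne n n']
    · simp [hgdef, SameK, Nat.unpair_pair, relEhat, (hne n' n).symm]
    · simp [hgdef, SameK, Nat.unpair_pair, relEhat, eSinj.eq_iff]
  refine ⟨g, ?_, ?_, ?_, ?_⟩
  · rintro (⟨n, m⟩ | ⟨n, v⟩) (⟨n', m'⟩ | ⟨n', v'⟩) h <;>
      simp only [hgdef, Nat.pair_eq_pair] at h
    · obtain ⟨h1, rfl⟩ := h
      rw [eIinj h1]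
    · exact absurd h.1 (hne n n')
    · exact absurd h.1.symm (hne n' n)
    · obtain ⟨h1, -⟩ := h
      rw [eSinj h1, Subsingleton.elim v v']
  · rw [hmem]
    ext x
    constructor
    · rintro (⟨K, hK, m, rfl⟩ | ⟨K, hK, rfl⟩)
      · rw [← eIrng] at hK
        obtain ⟨n, rfl⟩ := hK
        exact ⟨Sum.inl (n, m), rfl⟩
      · rw [← eSrng] at hK
        obtain ⟨n, rfl⟩ := hK
        exact ⟨Sum.inr (n, 0), rfl⟩
    · rintro ⟨z, rfl⟩
      have := hgmem z
      rw [hmem] at this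
      exact this
  · intro p q
    rw [hpos]
    simp only [Set.mem_setOf_eq, hgmem p, hgmem q, true_and]
    exact hsame p q
  · intro p q
    rw [hneg]
    simp only [Set.mem_setOf_eq, hgmem p, hgmem q, true_and]
    exact not_congr (hsame p q)

end Sigma2Aux


/-- if `A ⊨ ⋁_i ∃x ⋀_j ∀y α_{i,j}(x,y)` and `B` satisfies its
negation, where `{α_{i,j}}` is a listing of atomic formulas (a computable Σ₂
sentence separating `A` from `B`), then `{A, B} ≤_c {Ê₁, E}`. -/
theorem sigma2_to_equivalence {A B : Type} [Countable A] [Countable B]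
    (rA : A → A → Prop) (rB : B → B → Prop) (a : ℕ → ℕ → Atom2)
    (hA : ∃ i : ℕ, ∃ x : A, ∀ j : ℕ, ∀ y : A, (a i j).eval rA x y)
    (hB : ∀ i : ℕ, ∀ x : B, ∃ j : ℕ, ∃ y : B, ¬ (a i j).eval rB x y) :
    PairLE rA rB (relEhat 1) relE := by
  classical
  refine ⟨Sigma2Aux.Γop a, ?_, ?_⟩
  · rintro L ⟨f, finj, frng, hf⟩
    refine Sigma2Aux.outcopy_Ehat (Sigma2Aux.memD_keys a L) (Sigma2Aux.posD_eq a L)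
      (Sigma2Aux.negD_eq a L) ?_ ?_ Sigma2Aux.keys_disjoint
    · exact Set.infinite_of_injective_forall_mem Sigma2Aux.Kal_inj
        (fun n => Or.inl ⟨n, rfl⟩)
    · obtain ⟨i, x, hx⟩ := hA
      have hcx : f x ∈ L.dom := frng ▸ Set.mem_range_self x
      have hq : ¬ Sigma2Aux.QL a L i (f x) := by
        rintro ⟨j, d, hd, hnot⟩
        rw [← frng] at hd
        obtain ⟨y, rfl⟩ := hd
        exact hnot ((Sigma2Aux.eval_copy finj hf x y (a i j)).mpr (hx j y))
      refine Set.infinite_of_injective_forall_mem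
        (f := fun n => Sigma2Aux.Kt (f x) i n) ?_ ?_
      · intro n n' h
        exact (Sigma2Aux.Kt_eq_kt.mp h).2.2
      · exact fun n => ⟨f x, i, hcx, hq, n, rfl⟩
  · rintro L ⟨f, finj, frng, hf⟩
    have hsing : Sigma2Aux.KeySing L.dom (Sigma2Aux.QL a L) = ∅ := by
      ext K
      simp only [Set.mem_empty_iff_false, iff_false]
      rintro ⟨c, i, hc, hq, n, rfl⟩
      rw [← frng] at hc
      obtain ⟨x, rfl⟩ := hc
      obtain ⟨j, y, hy⟩ := hB i x
      exact hq ⟨j, f y, frng ▸ Set.mem_range_self y,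
        fun he => hy ((Sigma2Aux.eval_copy finj hf x y (a i j)).mp he)⟩
    refine Sigma2Aux.outcopy_E (KI := Sigma2Aux.KeyInf L.dom (Sigma2Aux.QL a L)) ?_ (Sigma2Aux.posD_eq a L) (Sigma2Aux.negD_eq a L)
      (Set.infinite_of_injective_forall_mem Sigma2Aux.Kal_inj
        (fun n => Or.inl ⟨n, rfl⟩))
    rw [Sigma2Aux.memD_keys a L, hsing]
    ext x
    simp only [Set.mem_setOf_eq, Set.mem_empty_iff_false, false_and, exists_false,
      or_false, exists_prop]
end
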